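/- arXiv:1205.4812 — 2 statements merged into one kernel-verified Lean document; each statement's English description precedes it below -/
import Mathlib

section
/- Let 1 < p < ∞ and 0 < T < ∞. For nonnegative measurable functions g_j : (0,T) → [0,∞), j ∈ ℤ, with f_j(r) = e^{-c 2^{2j} r} for a fixed c > 0, there is a constant C independent of T such that ∫_0^T ∫_0^t (Σ_{j=-∞}^∞ f_j(t−s) g_j(s))^p ds dt ≤ C ∫_0^T Σ_{j=-∞}^∞ 2^{-2j} g_j(s)^p ds. -/
/-!
Hölder's inequality in `j` with the weights `v_j = (4^j)^β`, `β = 1/(2(p-1))`, bounds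
`(∑_j f_j(r) g_j)^p` by `(∑_j f_j(r) v_j)^(p-1) · ∑_j f_j(r) v_j^(1-p) g_j^p`. The dyadic sum
`∑_j e^{-x 4^j} (4^j)^β` is `O(x^{-β})`: moving `x` down to a dyadic point `4^m ≤ x` and
shifting the index reduces it to its (finite) value at `x = 1`. So the first factor is
`O(r^{-1/2})`, and the pointwise bound becomes `∑_j k_j(r) g_j^p` with
`k_j(r) = (c 4^j r)^{-1/2} e^{-c 4^j r}`, a kernel of mass `Γ(1/2)/(c 4^j)`. Tonelli in `(t, s)`
then gives the inequality with a constant independent of `T`.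
-/

open MeasureTheory Real ENNReal Set

namespace ENNReal

variable {ι : Type*}

theorem inner_le_weight_mul_Lp_tsum {p : ℝ} (hp : 1 ≤ p) (w f : ι → ℝ≥0∞) :
    ∑' i, w i * f i ≤ (∑' i, w i) ^ (1 - p⁻¹) * (∑' i, w i * f i ^ p) ^ p⁻¹ := by
  have hp₀ : 0 ≤ p⁻¹ := inv_nonneg.2 (zero_le_one.trans hp)
  have hp₁ : 0 ≤ 1 - p⁻¹ := sub_nonneg.2 (inv_le_one_of_one_le₀ hp)
  refine tsum_le_of_sum_le' zero_le fun s => ?_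
  refine (inner_le_weight_mul_Lp_of_nonneg s hp w f).trans ?_
  gcongr <;> exact ENNReal.sum_le_tsum s

theorem rpow_tsum_mul_le_of_weight {p : ℝ} (hp : 1 < p) (k v g : ι → ℝ≥0∞)
    (hv₀ : ∀ i, v i ≠ 0) (hv : ∀ i, v i ≠ ∞) :
    (∑' i, k i * g i) ^ p ≤ (∑' i, k i * v i) ^ (p - 1) * ∑' i, k i * v i ^ (1 - p) * g i ^ p := by
  have hp₀ : 0 < p := zero_lt_one.trans hp
  have hsplit : ∀ i, k i * g i = k i * v i * (g i / v i) := fun i => by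
    rw [mul_assoc, ENNReal.mul_div_cancel (hv₀ i) (hv i)]
  have hweight : ∀ i, k i * v i * (g i / v i) ^ p = k i * v i ^ (1 - p) * g i ^ p := fun i => by
    rw [div_eq_mul_inv, ENNReal.mul_rpow_of_nonneg _ _ hp₀.le, ← ENNReal.rpow_neg_one,
      ← ENNReal.rpow_mul, sub_eq_add_neg, ENNReal.rpow_add _ _ (hv₀ i) (hv i), ENNReal.rpow_one]
    ring_nf
  calc (∑' i, k i * g i) ^ p
      ≤ ((∑' i, k i * v i) ^ (1 - p⁻¹) * (∑' i, k i * v i * (g i / v i) ^ p) ^ p⁻¹) ^ p := by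
        simp_rw [hsplit]
        gcongr
        exact inner_le_weight_mul_Lp_tsum hp.le _ _
    _ = (∑' i, k i * v i) ^ (p - 1) * ∑' i, k i * v i ^ (1 - p) * g i ^ p := by
        rw [ENNReal.mul_rpow_of_nonneg _ _ hp₀.le, ← ENNReal.rpow_mul, ← ENNReal.rpow_mul,
          inv_mul_cancel₀ hp₀.ne', ENNReal.rpow_one, sub_mul, one_mul,
          inv_mul_cancel₀ hp₀.ne']
        simp_rw [hweight]

end ENNReal

lemma exp_neg_mul_rpow_le_factorial_div {y β : ℝ} (hy : 1 ≤ y) {N : ℕ} (hN : β + 1 ≤ N) :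
    exp (-y) * y ^ β ≤ N.factorial / y := by
  have hy₀ : 0 < y := zero_lt_one.trans_le hy
  have hexp : y ^ N / N.factorial ≤ exp y := pow_div_factorial_le_exp y hy₀.le N
  have hpow : y ^ β * y ≤ y ^ N := by
    rw [← Real.rpow_natCast, ← Real.rpow_add_one hy₀.ne']
    exact Real.rpow_le_rpow_of_exponent_le hy hN
  rw [div_le_iff₀ (by positivity)] at hexp
  rw [Real.exp_neg, inv_mul_eq_div, div_le_div_iff₀ (exp_pos y) hy₀]
  linarith

section DyadicSum

variable {b β : ℝ}

lemma summable_exp_neg_zpow_mul_rpow (hb : 1 < b) (hβ : 0 < β) :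
    Summable fun j : ℤ => exp (-b ^ j) * (b ^ j) ^ β := by
  have hb₀ : 0 < b := zero_lt_one.trans hb
  have hnonneg : ∀ j : ℤ, 0 ≤ exp (-b ^ j) * (b ^ j) ^ β := fun j => by positivity
  rw [summable_int_iff_summable_nat_and_neg]
  constructor
  · obtain ⟨N, hN⟩ := exists_nat_ge (β + 1)
    refine (summable_geometric_of_lt_one (inv_nonneg.2 hb₀.le) (inv_lt_one_of_one_lt₀ hb)
      |>.mul_left (N.factorial : ℝ)).of_nonneg_of_le (fun n => hnonneg n) fun n => ?_
    rw [zpow_natCast, inv_pow, ← div_eq_mul_inv]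
    exact exp_neg_mul_rpow_le_factorial_div (one_le_pow₀ hb.le) hN
  · refine (summable_geometric_of_lt_one (by positivity)
      (Real.rpow_lt_one_of_one_lt_of_neg hb (neg_lt_zero.2 hβ))).of_nonneg_of_le
      (fun n => hnonneg _) fun n => ?_
    calc exp (-b ^ (-(n : ℤ))) * (b ^ (-(n : ℤ))) ^ β ≤ 1 * (b ^ (-(n : ℤ))) ^ β := by
          gcongr
          exact exp_le_one_iff.2 (neg_nonpos.2 (by positivity))
      _ = (b ^ (-β)) ^ n := by
          rw [one_mul, zpow_neg, zpow_natCast, Real.inv_rpow (by positivity),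
            ← Real.rpow_natCast_mul hb₀.le, ← Real.rpow_neg hb₀.le, ← Real.rpow_natCast,
            ← Real.rpow_mul hb₀.le]
          ring_nf

lemma tsum_ofReal_exp_neg_mul_zpow_mul_rpow_le (hb : 1 < b) (hβ : 0 < β) :
    ∃ K > 0, ∀ x > 0, ∑' j : ℤ, ENNReal.ofReal (exp (-(x * b ^ j)) * (b ^ j) ^ β)
      ≤ ENNReal.ofReal (K * x ^ (-β)) := by
  have hb₀ : 0 < b := zero_lt_one.trans hb
  set u : ℤ → ℝ := fun j => exp (-b ^ j) * (b ^ j) ^ β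
  have hu := summable_exp_neg_zpow_mul_rpow hb hβ
  have hu₀ : ∀ j, 0 ≤ u j := fun j => by positivity
  refine ⟨b ^ β * ∑' j, u j, mul_pos (by positivity) (hu.tsum_pos hu₀ 0 (by positivity)),
    fun x hx => ?_⟩
  obtain ⟨m, hmx, hxm⟩ := exists_mem_Ico_zpow hx hb
  have hbm : 0 < b ^ m := zpow_pos hb₀ m
  have hterm (j : ℤ) : exp (-(x * b ^ j)) * (b ^ j) ^ β ≤ (b ^ m) ^ (-β) * u (j + m) := by
    have hscale : (b ^ j) ^ β = (b ^ m) ^ (-β) * (b ^ (j + m)) ^ β := by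
      rw [zpow_add₀ hb₀.ne', Real.mul_rpow (zpow_pos hb₀ j).le hbm.le, Real.rpow_neg hbm.le]
      field_simp
    have hexp : b ^ (j + m) ≤ x * b ^ j := by
      rw [zpow_add₀ hb₀.ne', mul_comm]
      exact mul_le_mul_of_nonneg_right hmx (zpow_pos hb₀ j).le
    rw [hscale, mul_left_comm]
    exact mul_le_mul_of_nonneg_left
      (mul_le_mul_of_nonneg_right (exp_le_exp.2 (neg_le_neg hexp)) (by positivity)) (by positivity)
  have hpow : (b ^ m) ^ (-β) ≤ b ^ β * x ^ (-β) := by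
    calc (b ^ m) ^ (-β) = b ^ β * (b ^ (m + 1)) ^ (-β) := by
          rw [zpow_add_one₀ hb₀.ne', Real.mul_rpow hbm.le hb₀.le, Real.rpow_neg hb₀.le]
          field_simp
      _ ≤ b ^ β * x ^ (-β) :=
          mul_le_mul_of_nonneg_left
            (Real.rpow_le_rpow_of_nonpos hx hxm.le (neg_nonpos.2 hβ.le)) (by positivity)
  calc ∑' j : ℤ, ENNReal.ofReal (exp (-(x * b ^ j)) * (b ^ j) ^ β)
      ≤ ∑' j : ℤ, ENNReal.ofReal ((b ^ m) ^ (-β)) * ENNReal.ofReal (u (j + m)) := by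
        gcongr with j
        rw [← ENNReal.ofReal_mul (by positivity)]
        exact ENNReal.ofReal_le_ofReal (hterm j)
    _ = ENNReal.ofReal ((b ^ m) ^ (-β) * ∑' j, u j) := by
        rw [ENNReal.tsum_mul_left, ENNReal.ofReal_mul (by positivity),
          ENNReal.ofReal_tsum_of_nonneg hu₀ hu]
        exact congrArg _ ((Equiv.addRight m).tsum_eq fun j => ENNReal.ofReal (u j))
    _ ≤ ENNReal.ofReal ((b ^ β * ∑' j, u j) * x ^ (-β)) :=
        ENNReal.ofReal_le_ofReal
          ((mul_le_mul_of_nonneg_right hpow (tsum_nonneg hu₀)).trans_eq (by ring))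

end DyadicSum

lemma rpow_tsum_exp_neg_mul_le {p c : ℝ} (hp : 1 < p) (hc : 0 < c) :
    ∃ K > 0, ∀ r > 0, ∀ G : ℤ → ℝ≥0∞,
      (∑' j : ℤ, ENNReal.ofReal (exp (-c * 4 ^ j * r)) * G j) ^ p
        ≤ ENNReal.ofReal K * ∑' j : ℤ,
            ENNReal.ofReal (exp (-(c * 4 ^ j * r)) * (c * 4 ^ j * r) ^ (-(1 / 2) : ℝ)) *
              G j ^ p := by
  have hp₁ : 0 < p - 1 := sub_pos.2 hp
  set β := (2 * (p - 1))⁻¹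
  have hβ : 0 < β := by positivity
  have hβp : β * (p - 1) = 1 / 2 := by
    simp only [β]
    field_simp
  obtain ⟨K, hK, hsum⟩ := tsum_ofReal_exp_neg_mul_zpow_mul_rpow_le (b := 4) (by norm_num) hβ
  refine ⟨K ^ (p - 1), by positivity, fun r hr G => ?_⟩
  have h4 : ∀ j : ℤ, (0 : ℝ) < 4 ^ j := fun j => zpow_pos (by norm_num) j
  set k : ℤ → ℝ≥0∞ := fun j => ENNReal.ofReal (exp (-c * 4 ^ j * r))
  set v : ℤ → ℝ≥0∞ := fun j => ENNReal.ofReal ((4 ^ j) ^ β)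
  have hkv : ∑' j, k j * v j ≤ ENNReal.ofReal (K * (c * r) ^ (-β)) := by
    refine le_of_eq_of_le (tsum_congr fun j => ?_) (hsum (c * r) (by positivity))
    rw [← ENNReal.ofReal_mul (exp_pos _).le, neg_mul, neg_mul, mul_right_comm]
  have hpow : ENNReal.ofReal (K * (c * r) ^ (-β)) ^ (p - 1)
      = ENNReal.ofReal (K ^ (p - 1)) * ENNReal.ofReal ((c * r) ^ (-(1 / 2) : ℝ)) := by
    rw [ENNReal.ofReal_rpow_of_pos (by positivity), Real.mul_rpow hK.le (by positivity),
      ← Real.rpow_mul (by positivity), ENNReal.ofReal_mul (by positivity), neg_mul, hβp]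
  have hweight : ∀ j, ENNReal.ofReal ((c * r) ^ (-(1 / 2) : ℝ)) * (k j * v j ^ (1 - p) * G j ^ p)
      = ENNReal.ofReal (exp (-(c * 4 ^ j * r)) * (c * 4 ^ j * r) ^ (-(1 / 2) : ℝ)) * G j ^ p := by
    intro j
    have hv : ((4 ^ j : ℝ) ^ β) ^ (1 - p) = (4 ^ j : ℝ) ^ (-(1 / 2) : ℝ) := by
      rw [← Real.rpow_mul (h4 j).le]
      congr 1
      linear_combination -hβp
    have hexp : exp (-c * 4 ^ j * r) = exp (-(c * r * 4 ^ j)) := by ring_nf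
    rw [ENNReal.ofReal_rpow_of_pos (by positivity), hv, ← mul_assoc, ← mul_assoc,
      ← ENNReal.ofReal_mul (by positivity), ← ENNReal.ofReal_mul (by positivity),
      mul_right_comm c, Real.mul_rpow (by positivity) (h4 j).le, hexp]
    ring_nf
  calc (∑' j, k j * G j) ^ p
      ≤ (∑' j, k j * v j) ^ (p - 1) * ∑' j, k j * v j ^ (1 - p) * G j ^ p :=
        ENNReal.rpow_tsum_mul_le_of_weight hp k v G
          (fun j => (ENNReal.ofReal_pos.2 (by positivity)).ne') fun j => ENNReal.ofReal_ne_top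
    _ ≤ ENNReal.ofReal (K * (c * r) ^ (-β)) ^ (p - 1) * ∑' j, k j * v j ^ (1 - p) * G j ^ p := by
        gcongr
    _ = _ := by
        rw [hpow, mul_assoc, ← ENNReal.tsum_mul_left]
        simp only [hweight]

lemma lintegral_lintegral_sub_mul {F G : ℝ → ℝ≥0∞} (hF : Measurable F) (hG : Measurable G) :
    ∫⁻ t, ∫⁻ s, F (t - s) * G s = (∫⁻ r, F r) * ∫⁻ s, G s := by
  rw [lintegral_lintegral_swap ((hF.comp (measurable_fst.sub measurable_snd)).mul
    (hG.comp measurable_snd)).aemeasurable]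
  have hinner : ∀ s, ∫⁻ t, F (t - s) * G s = (∫⁻ r, F r) * G s := fun s => by
    rw [lintegral_mul_const _ (by fun_prop : Measurable fun t => F (t - s)),
      lintegral_sub_right_eq_self]
  simp only [hinner]
  exact lintegral_const_mul _ hG

lemma lintegral_Ioo_lintegral_Ioo_tsum_sub_mul_le {ι : Type*} [Countable ι] (T : ℝ)
    {F G : ι → ℝ → ℝ≥0∞} (hF : ∀ i, Measurable (F i)) (hG : ∀ i, Measurable (G i)) :
    ∫⁻ t in Ioo 0 T, ∫⁻ s in Ioo 0 t, ∑' i, F i (t - s) * G i s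
      ≤ ∑' i, (∫⁻ r in Ioi 0, F i r) * ∫⁻ s in Ioo 0 T, G i s := by
  set F' : ι → ℝ → ℝ≥0∞ := fun i => (Ioi 0).indicator (F i)
  set G' : ι → ℝ → ℝ≥0∞ := fun i => (Ioo 0 T).indicator (G i)
  have hF' : ∀ i, Measurable (F' i) := fun i => (hF i).indicator measurableSet_Ioi
  have hG' : ∀ i, Measurable (G' i) := fun i => (hG i).indicator measurableSet_Ioo
  have hH : ∀ i, Measurable fun z : ℝ × ℝ => F' i (z.1 - z.2) * G' i z.2 := fun i =>
    ((hF' i).comp (measurable_fst.sub measurable_snd)).mul ((hG' i).comp measurable_snd)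
  calc ∫⁻ t in Ioo 0 T, ∫⁻ s in Ioo 0 t, ∑' i, F i (t - s) * G i s
      = ∫⁻ t in Ioo 0 T, ∫⁻ s in Ioo 0 t, ∑' i, F' i (t - s) * G' i s := by
        refine setLIntegral_congr_fun measurableSet_Ioo fun t ht => ?_
        refine setLIntegral_congr_fun measurableSet_Ioo fun s hs => ?_
        refine tsum_congr fun i => ?_
        simp only [F', G', indicator_of_mem (mem_Ioi.2 (sub_pos.2 hs.2)),
          indicator_of_mem (show s ∈ Ioo 0 T from ⟨hs.1, hs.2.trans ht.2⟩)]
    _ ≤ ∫⁻ t, ∫⁻ s, ∑' i, F' i (t - s) * G' i s :=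
        (lintegral_mono fun t => setLIntegral_le_lintegral _ _).trans
          (setLIntegral_le_lintegral _ _)
    _ = ∫⁻ t, ∑' i, ∫⁻ s, F' i (t - s) * G' i s :=
        lintegral_congr fun t =>
          lintegral_tsum fun i => ((hH i).comp measurable_prodMk_left).aemeasurable
    _ = ∑' i, ∫⁻ t, ∫⁻ s, F' i (t - s) * G' i s :=
        lintegral_tsum fun i => (hH i).lintegral_prod_right'.aemeasurable
    _ = ∑' i, (∫⁻ r in Ioi 0, F i r) * ∫⁻ s in Ioo 0 T, G i s := by
        refine tsum_congr fun i => ?_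
        rw [lintegral_lintegral_sub_mul (hF' i) (hG' i), lintegral_indicator measurableSet_Ioi,
          lintegral_indicator measurableSet_Ioo]

lemma lintegral_Ioi_exp_neg_mul_mul_rpow {s a : ℝ} (hs : 0 < s) (ha : 0 < a) :
    ∫⁻ r in Ioi 0, ENNReal.ofReal (exp (-(a * r)) * (a * r) ^ (s - 1))
      = ENNReal.ofReal (Gamma s / a) := by
  set γ : ℝ → ℝ := fun x => exp (-x) * x ^ (s - 1)
  have hint : IntegrableOn (fun r => γ (a * r)) (Ioi 0) :=
    (integrableOn_Ioi_comp_mul_left_iff γ 0 ha).2 (by simpa using GammaIntegral_convergent hs)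
  have hnonneg : 0 ≤ᵐ[volume.restrict (Ioi 0)] fun r => γ (a * r) := by
    filter_upwards [ae_restrict_mem measurableSet_Ioi] with r (hr : 0 < r)
    positivity
  rw [← ofReal_integral_eq_lintegral_ofReal hint hnonneg, integral_comp_mul_left_Ioi γ 0 ha,
    mul_zero, ← Gamma_eq_integral hs, smul_eq_mul, inv_mul_eq_div]

lemma lintegral_Ioi_exp_neg_mul_four_zpow_mul_rpow {c : ℝ} (hc : 0 < c) (j : ℤ) :
    ∫⁻ r in Ioi 0, ENNReal.ofReal (exp (-(c * 4 ^ j * r)) * (c * 4 ^ j * r) ^ (-(1 / 2) : ℝ))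
      = ENNReal.ofReal (Gamma (1 / 2) / c) * ENNReal.ofReal ((2 : ℝ) ^ (-2 * j)) := by
  have h4j : (0 : ℝ) < 4 ^ j := zpow_pos (by norm_num) j
  rw [show (-(1 / 2) : ℝ) = 1 / 2 - 1 by norm_num,
    lintegral_Ioi_exp_neg_mul_mul_rpow one_half_pos (by positivity),
    ← ENNReal.ofReal_mul (by positivity), neg_mul, zpow_neg, zpow_mul,
    show (2 : ℝ) ^ (2 : ℤ) = 4 by norm_num]
  congr 1
  ring

/-- Hardy-type inequality over the full range of dyadic indices
j ∈ ℤ, with kernels f_j(r) = e^{-c 2^{2j} r}; the constant is independent of T. -/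
theorem stmt8 (p c : ℝ) (hp : 1 < p) (hc : 0 < c) :
    ∃ C > (0:ℝ), ∀ T : ℝ, 0 < T →
      ∀ g : ℤ → ℝ → ℝ≥0∞, (∀ j, Measurable (g j)) →
        ∫⁻ t in Set.Ioo (0:ℝ) T, ∫⁻ s in Set.Ioo (0:ℝ) t,
            (∑' j : ℤ, ENNReal.ofReal (Real.exp (-c * (2:ℝ)^(2*j) * (t - s))) *
              g j s) ^ p
          ≤ ENNReal.ofReal C *
            ∫⁻ s in Set.Ioo (0:ℝ) T,
              ∑' j : ℤ, ENNReal.ofReal ((2:ℝ)^(-2*j)) * (g j s) ^ p := by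
  obtain ⟨K, hK, hpointwise⟩ := rpow_tsum_exp_neg_mul_le hp hc
  refine ⟨K * (Gamma (1 / 2) / c), mul_pos hK (div_pos (Gamma_pos_of_pos one_half_pos) hc),
    fun T _ g hg => ?_⟩
  have h4 : ∀ j : ℤ, (2 : ℝ) ^ (2 * j) = 4 ^ j := fun j => by rw [zpow_mul]; norm_num
  set F : ℤ → ℝ → ℝ≥0∞ := fun j r =>
    ENNReal.ofReal (exp (-(c * 4 ^ j * r)) * (c * 4 ^ j * r) ^ (-(1 / 2) : ℝ))
  have hF : ∀ j, Measurable (F j) := fun j => by fun_prop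
  have hgp : ∀ j, Measurable fun s => g j s ^ p := fun j => (hg j).pow_const p
  calc ∫⁻ t in Ioo 0 T, ∫⁻ s in Ioo 0 t,
          (∑' j : ℤ, ENNReal.ofReal (exp (-c * (2 : ℝ) ^ (2 * j) * (t - s))) * g j s) ^ p
      ≤ ∫⁻ t in Ioo 0 T, ∫⁻ s in Ioo 0 t,
          ENNReal.ofReal K * ∑' j, F j (t - s) * g j s ^ p := by
        refine setLIntegral_mono' measurableSet_Ioo fun t _ =>
          setLIntegral_mono' measurableSet_Ioo fun s hs => ?_
        simpa only [h4] using hpointwise (t - s) (sub_pos.2 hs.2) (fun j => g j s)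
    _ = ENNReal.ofReal K * ∫⁻ t in Ioo 0 T, ∫⁻ s in Ioo 0 t, ∑' j, F j (t - s) * g j s ^ p := by
        simp only [lintegral_const_mul' _ _ ENNReal.ofReal_ne_top]
    _ ≤ ENNReal.ofReal K * ∑' j, (∫⁻ r in Ioi 0, F j r) * ∫⁻ s in Ioo 0 T, g j s ^ p := by
        gcongr
        exact lintegral_Ioo_lintegral_Ioo_tsum_sub_mul_le T hF hgp
    _ = ENNReal.ofReal (K * (Gamma (1 / 2) / c)) *
          ∫⁻ s in Ioo 0 T, ∑' j : ℤ, ENNReal.ofReal ((2 : ℝ) ^ (-2 * j)) * g j s ^ p := by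
        rw [lintegral_tsum fun j => ((hgp j).const_mul _).aemeasurable,
          ENNReal.ofReal_mul hK.le, mul_assoc,
          ← ENNReal.tsum_mul_left (a := ENNReal.ofReal (Gamma (1 / 2) / c))]
        congr 1
        refine tsum_congr fun j => ?_
        rw [lintegral_Ioi_exp_neg_mul_four_zpow_mul_rpow hc, lintegral_const_mul _ (hgp j),
          mul_assoc]
end

section
/- Let 1 < p < ∞, 0 < α < 1, c > 0, and f_j(r) = e^{-c 2^{2jα} r}. Then for any nonnegative measurable g_j on (0,T), ∫_0^T ∫_0^t (Σ_{j∈ℤ} f_j(t−s) g_j(s))^p ds dt ≤ C ∫_0^T Σ_{j∈ℤ} 2^{-2jα} g_j(s)^p ds, with C independent of T, corresponding to the homogeneous Besov space Ḃ_p^{-2α/p} regularity gain for the fractional heat semigroup. -/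
/-!
Write `x_j = 2^{2jα} (t - s)` and split `e^{-c x_j} = (x_j^σ e^{-c x_j/2}) (x_j^{-σ} e^{-c x_j/2})`
with `σ (p - 1) = 1/2`. Hölder's inequality in `j` bounds the integrand by
`(∑_j x_j^σ e^{-c x_j/2})^{p-1} ∑_j x_j^{-1/2} e^{-d x_j} g_j(s)^p`. The first factor is bounded
uniformly in `t - s`: the terms decay geometrically on both sides of the index where `x_j ≈ 1`.
After Fubini and the substitution `r = t - s`, each `∫_0^∞ x_j^{-1/2} e^{-d x_j} dr` equals
`Γ(1/2) d^{-1/2} 2^{-2jα}` (here `d = c (1 + p) / 2`), which produces the Besov weight.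
-/

open MeasureTheory Real ENNReal
open Set Function

theorem ENNReal.inner_le_weight_mul_Lp_tsum_s18 {ι : Type*} {p : ℝ} (hp : 1 ≤ p) (w f : ι → ℝ≥0∞) :
    ∑' i, w i * f i ≤ (∑' i, w i) ^ (1 - p⁻¹) * (∑' i, w i * f i ^ p) ^ p⁻¹ := by
  have : 0 ≤ 1 - p⁻¹ := sub_nonneg.2 (inv_le_one_of_one_le₀ hp)
  rw [ENNReal.tsum_eq_iSup_sum]
  refine iSup_le fun s => (inner_le_weight_mul_Lp_of_nonneg s hp w f).trans ?_
  gcongr <;> exact ENNReal.sum_le_tsum s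

theorem ENNReal.rpow_tsum_mul_le {ι : Type*} {p : ℝ} (hp : 1 ≤ p) (w f : ι → ℝ≥0∞) :
    (∑' i, w i * f i) ^ p ≤ (∑' i, w i) ^ (p - 1) * ∑' i, w i * f i ^ p := by
  have hp0 : 0 < p := by linarith
  calc (∑' i, w i * f i) ^ p
      ≤ ((∑' i, w i) ^ (1 - p⁻¹) * (∑' i, w i * f i ^ p) ^ p⁻¹) ^ p :=
        ENNReal.rpow_le_rpow (ENNReal.inner_le_weight_mul_Lp_tsum_s18 hp w f) hp0.le
    _ = _ := by
        rw [ENNReal.mul_rpow_of_nonneg _ _ hp0.le, ← ENNReal.rpow_mul, ← ENNReal.rpow_mul,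
          inv_mul_cancel₀ hp0.ne', ENNReal.rpow_one, sub_mul, one_mul, inv_mul_cancel₀ hp0.ne']

theorem rpow_tsum_ofReal_exp_mul_le {ι : Type*} {p : ℝ} (hp : 1 ≤ p) (c σ : ℝ) {x : ι → ℝ}
    (hx : ∀ i, 0 < x i) (g : ι → ℝ≥0∞) :
    (∑' i, ENNReal.ofReal (exp (-c * x i)) * g i) ^ p ≤
      (∑' i, ENNReal.ofReal (x i ^ σ * exp (-(c / 2) * x i))) ^ (p - 1) *
        ∑' i, ENNReal.ofReal (x i ^ (-(σ * (p - 1))) * exp (-(c * (1 + p) / 2) * x i)) *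
          g i ^ p := by
  set w : ι → ℝ := fun i => x i ^ σ * exp (-(c / 2) * x i)
  set v : ι → ℝ := fun i => x i ^ (-σ) * exp (-(c / 2) * x i)
  have hw : ∀ i, 0 ≤ w i := fun i => by have := hx i; positivity
  have hv : ∀ i, 0 ≤ v i := fun i => by have := hx i; positivity
  have hwv : ∀ i, ENNReal.ofReal (exp (-c * x i)) * g i =
      ENNReal.ofReal (w i) * (ENNReal.ofReal (v i) * g i) := fun i => by
    rw [← mul_assoc, ← ENNReal.ofReal_mul (hw i), mul_mul_mul_comm, ← rpow_add (hx i),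
      add_neg_cancel, Real.rpow_zero, one_mul, ← exp_add]
    ring_nf
  have hwvp : ∀ i, ENNReal.ofReal (w i) * (ENNReal.ofReal (v i) * g i) ^ p =
      ENNReal.ofReal (x i ^ (-(σ * (p - 1))) * exp (-(c * (1 + p) / 2) * x i)) * g i ^ p :=
    fun i => by
      rw [ENNReal.mul_rpow_of_nonneg _ _ (by linarith),
        ENNReal.ofReal_rpow_of_nonneg (hv i) (by linarith), ← mul_assoc,
        ← ENNReal.ofReal_mul (hw i), mul_rpow (by have := hx i; positivity) (exp_pos _).le,
        ← rpow_mul (hx i).le, ← exp_mul, mul_mul_mul_comm, ← rpow_add (hx i), ← exp_add]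
      congr 4 <;> ring
  calc (∑' i, ENNReal.ofReal (exp (-c * x i)) * g i) ^ p
      = (∑' i, ENNReal.ofReal (w i) * (ENNReal.ofReal (v i) * g i)) ^ p := by
        rw [tsum_congr hwv]
    _ ≤ _ := ENNReal.rpow_tsum_mul_le hp _ _
    _ = _ := by rw [tsum_congr hwvp]

theorem ENNReal.tsum_int_le_of_le_geometric {f : ℤ → ℝ≥0∞} (J : ℤ) {A B y z : ℝ} (hA : 0 ≤ A)
    (hB : 0 ≤ B) (hy₀ : 0 ≤ y) (hy₁ : y < 1) (hz₀ : 0 ≤ z) (hz₁ : z < 1)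
    (hlo : ∀ n : ℕ, f (J - n) ≤ ENNReal.ofReal (A * y ^ n))
    (hhi : ∀ n : ℕ, f (J + 1 + n) ≤ ENNReal.ofReal (B * z ^ n)) :
    ∑' j, f j ≤ ENNReal.ofReal (A / (1 - y) + B / (1 - z)) := by
  have geom : ∀ {C x : ℝ}, 0 ≤ C → 0 ≤ x → x < 1 →
      ∑' n : ℕ, ENNReal.ofReal (C * x ^ n) = ENNReal.ofReal (C / (1 - x)) := by
    intro C x hC hx₀ hx₁
    rw [← ENNReal.ofReal_tsum_of_nonneg (fun n => by positivity)
      ((summable_geometric_of_lt_one hx₀ hx₁).mul_left C), tsum_mul_left,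
      tsum_geometric_of_lt_one hx₀ hx₁, div_eq_mul_inv]
  calc ∑' j, f j = ∑' k, f (J + 1 + k) := ((Equiv.addLeft (J + 1)).tsum_eq f).symm
    _ = ∑' n : ℕ, f (J + 1 + n) + ∑' n : ℕ, f (J - n) := by
        rw [tsum_of_nat_of_neg_add_one ENNReal.summable ENNReal.summable]
        congr 2 with n
        ring_nf
    _ ≤ ∑' n : ℕ, ENNReal.ofReal (B * z ^ n) + ∑' n : ℕ, ENNReal.ofReal (A * y ^ n) := by
        gcongr with n n
        exacts [hhi n, hlo n]
    _ = ENNReal.ofReal (A / (1 - y) + B / (1 - z)) := by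
        rw [geom hB hz₀ hz₁, geom hA hy₀ hy₁, add_comm,
          ENNReal.ofReal_add (div_nonneg hA (by linarith)) (div_nonneg hB (by linarith))]

theorem Real.exp_neg_le_factorial_mul_rpow (m : ℕ) {x : ℝ} (hx : 0 < x) :
    exp (-x) ≤ m.factorial * x ^ (-(m : ℝ)) := by
  rw [exp_neg, rpow_neg hx.le, rpow_natCast, ← div_eq_mul_inv,
    inv_le_comm₀ (exp_pos x) (by positivity), inv_div]
  exact pow_div_factorial_le_exp x hx.le m

theorem exists_tsum_zpow_rpow_mul_exp_le {ρ a β : ℝ} (hρ : 1 < ρ) (ha : 0 < a) (hβ : 0 < β) :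
    ∃ K > 0, ∀ r > 0,
      ∑' j : ℤ, ENNReal.ofReal ((ρ ^ j * r) ^ β * exp (-a * (ρ ^ j * r))) ≤ ENNReal.ofReal K := by
  have hρ₀ : 0 < ρ := one_pos.trans hρ
  set m : ℕ := ⌊β⌋₊ + 1
  have hβm : β - m < 0 := by simp only [m]; push_cast; linarith [Nat.lt_floor_add_one β]
  set M : ℝ := m.factorial * a ^ (-(m : ℝ))
  have hM : 0 < M := by positivity
  -- `e^{-x} ≤ m! x^{-m}` with `m > β` gives geometric decay of the terms with `ρ^j r > 1`.
  have hdecay : ∀ x > 0, x ^ β * exp (-a * x) ≤ M * x ^ (β - m) := fun x hx => by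
    calc x ^ β * exp (-a * x) ≤ x ^ β * (m.factorial * (a * x) ^ (-(m : ℝ))) := by
          rw [neg_mul]; gcongr; exact exp_neg_le_factorial_mul_rpow m (by positivity)
      _ = M * x ^ (β - m) := by
          rw [mul_rpow ha.le hx.le, rpow_sub hx]; simp only [M, rpow_neg hx.le]; ring
  have hy : ρ⁻¹ ^ β < 1 := rpow_lt_one (by positivity) (inv_lt_one_of_one_lt₀ hρ) hβ
  have hz : ρ ^ (β - m) < 1 := rpow_lt_one_of_one_lt_of_neg hρ hβm
  refine ⟨1 / (1 - ρ⁻¹ ^ β) + M / (1 - ρ ^ (β - m)), ?_, fun r hr => ?_⟩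
  · have := sub_pos.2 hy; have := sub_pos.2 hz; positivity
  obtain ⟨J, hJ⟩ := exists_mem_Ico_zpow (inv_pos.2 hr) hρ
  have hJr : ρ ^ J * r ≤ 1 := by rw [← le_div_iff₀ hr, one_div]; exact hJ.1
  have hJr' : 1 < ρ ^ (J + 1) * r := by rw [← div_lt_iff₀ hr, one_div]; exact hJ.2
  refine ENNReal.tsum_int_le_of_le_geometric J zero_le_one hM.le (by positivity) hy
    (by positivity) hz (fun n => ENNReal.ofReal_le_ofReal ?_) (fun n => ENNReal.ofReal_le_ofReal ?_)
  · have hx : 0 < ρ ^ (J - n) * r := by positivity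
    calc (ρ ^ (J - n) * r) ^ β * exp (-a * (ρ ^ (J - n) * r))
        ≤ (ρ ^ (J - n) * r) ^ β :=
          mul_le_of_le_one_right (by positivity) (exp_le_one_iff.2 (by nlinarith))
      _ = (ρ ^ J * r) ^ β * (ρ⁻¹ ^ β) ^ n := by
          rw [rpow_pow_comm (inv_nonneg.2 hρ₀.le), ← mul_rpow (by positivity) (by positivity),
            zpow_sub₀ hρ₀.ne', zpow_natCast]
          congr 1
          ring
      _ ≤ 1 * (ρ⁻¹ ^ β) ^ n := by
          gcongr; exact rpow_le_one (by positivity) hJr hβ.le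
  · calc (ρ ^ (J + 1 + n) * r) ^ β * exp (-a * (ρ ^ (J + 1 + n) * r))
        ≤ M * (ρ ^ (J + 1 + n) * r) ^ (β - m) := hdecay _ (by positivity)
      _ = M * ((ρ ^ (J + 1) * r) ^ (β - m) * (ρ ^ (β - m)) ^ n) := by
          rw [rpow_pow_comm hρ₀.le, ← mul_rpow (by positivity) (by positivity),
            zpow_add₀ hρ₀.ne', zpow_natCast, mul_right_comm _ (ρ ^ n)]
      _ ≤ M * (ρ ^ (β - m)) ^ n :=
          mul_le_mul_of_nonneg_left (mul_le_of_le_one_left (by positivity)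
            (rpow_le_one_of_one_le_of_nonpos hJr'.le hβm.le)) hM.le

theorem lintegral_Ioi_rpow_mul_exp_neg_mul {a b d : ℝ} (ha : 0 < a) (hb : 0 < b) (hd : 0 < d) :
    ∫⁻ r in Ioi 0, ENNReal.ofReal ((b * r) ^ (a - 1) * exp (-d * (b * r))) =
      ENNReal.ofReal (b⁻¹ * ((1 / d) ^ a * Gamma a)) := by
  set f : ℝ → ℝ := fun u => u ^ (a - 1) * exp (-d * u)
  have hf : IntegrableOn f (Ioi 0) := by
    simpa [f] using integrableOn_rpow_mul_exp_neg_mul_rpow (p := 1) (by linarith) one_pos hd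
  rw [← ofReal_integral_eq_lintegral_ofReal, integral_comp_mul_left_Ioi f 0 hb, mul_zero]
  · simp only [f, neg_mul, integral_rpow_mul_exp_neg_mul_Ioi ha hd, smul_eq_mul]
  · exact (integrableOn_Ioi_comp_mul_left_iff f 0 hb).2 (by rwa [mul_zero])
  · filter_upwards [ae_restrict_mem measurableSet_Ioi] with r (hr : 0 < r)
    positivity

theorem lintegral_Ioo_lintegral_Ioo_sub_le (T : ℝ) (H : ℝ → ℝ → ℝ≥0∞)
    (hH : Measurable (uncurry H)) :
    ∫⁻ t in Ioo 0 T, ∫⁻ s in Ioo 0 t, H (t - s) s ≤ ∫⁻ s in Ioo 0 T, ∫⁻ r in Ioi 0, H r s := by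
  set G : ℝ → ℝ → ℝ≥0∞ := fun t s => (Ioi 0).indicator (fun r => H r s) (t - s)
  have hG : Measurable (uncurry G) :=
    (hH.indicator (measurableSet_lt measurable_const measurable_fst)).comp
      (measurable_fst.sub measurable_snd |>.prodMk measurable_snd)
  calc ∫⁻ t in Ioo 0 T, ∫⁻ s in Ioo 0 t, H (t - s) s
      ≤ ∫⁻ t in Ioo 0 T, ∫⁻ s in Ioo 0 T, G t s := by
        refine setLIntegral_mono' measurableSet_Ioo fun t ht => ?_
        calc ∫⁻ s in Ioo 0 t, H (t - s) s = ∫⁻ s in Ioo 0 t, G t s :=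
              setLIntegral_congr_fun measurableSet_Ioo fun s hs =>
                (indicator_of_mem (mem_Ioi.2 (sub_pos.2 hs.2)) (fun r => H r s)).symm
          _ ≤ ∫⁻ s in Ioo 0 T, G t s := lintegral_mono_set (Ioo_subset_Ioo_right ht.2.le)
    _ = ∫⁻ s in Ioo 0 T, ∫⁻ t in Ioo 0 T, G t s := lintegral_lintegral_swap hG.aemeasurable
    _ ≤ ∫⁻ s in Ioo 0 T, ∫⁻ t, G t s := by gcongr; exact Measure.restrict_le_self
    _ = ∫⁻ s in Ioo 0 T, ∫⁻ r in Ioi 0, H r s := by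
        refine setLIntegral_congr_fun measurableSet_Ioo fun s _ => ?_
        rw [lintegral_sub_right_eq_self (fun r => (Ioi 0).indicator (fun r => H r s) r) s,
          lintegral_indicator measurableSet_Ioi]

theorem exists_lintegral_rpow_tsum_exp_zpow_le {ρ c p : ℝ} (hρ : 1 < ρ) (hc : 0 < c)
    (hp : 1 < p) :
    ∃ C > 0, ∀ T : ℝ, ∀ g : ℤ → ℝ → ℝ≥0∞, (∀ j, Measurable (g j)) →
      ∫⁻ t in Ioo 0 T, ∫⁻ s in Ioo 0 t,
          (∑' j : ℤ, ENNReal.ofReal (exp (-c * ρ ^ j * (t - s))) * g j s) ^ p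
        ≤ ENNReal.ofReal C * ∫⁻ s in Ioo 0 T, ∑' j : ℤ, ENNReal.ofReal (ρ ^ j)⁻¹ * g j s ^ p := by
  have hρ₀ : 0 < ρ := one_pos.trans hρ
  set σ : ℝ := 1 / (2 * (p - 1))
  have hσ : -(σ * (p - 1)) = 1 / 2 - 1 := by
    simp only [σ]; field_simp [(sub_pos.2 hp).ne']; ring
  set d : ℝ := c * (1 + p) / 2
  have hd : 0 < d := by positivity
  obtain ⟨K, hK₀, hK⟩ :=
    exists_tsum_zpow_rpow_mul_exp_le hρ (half_pos hc) (by positivity : 0 < σ)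
  refine ⟨K ^ (p - 1) * ((1 / d) ^ (1 / 2 : ℝ) * Gamma (1 / 2)), by positivity,
    fun T g hg => ?_⟩
  set H : ℝ → ℝ → ℝ≥0∞ := fun r s =>
    ∑' j : ℤ, ENNReal.ofReal ((ρ ^ j * r) ^ (1 / 2 - 1 : ℝ) * exp (-d * (ρ ^ j * r))) * g j s ^ p
  have hH : Measurable (uncurry H) := Measurable.tsum fun j => by
    have := hg j; fun_prop
  have hpointwise : ∀ r > 0, ∀ s,
      (∑' j : ℤ, ENNReal.ofReal (exp (-c * ρ ^ j * r)) * g j s) ^ p ≤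
        ENNReal.ofReal (K ^ (p - 1)) * H r s := fun r hr s => by
    simp_rw [mul_assoc (-c)]
    calc _ ≤ _ := rpow_tsum_ofReal_exp_mul_le hp.le c σ (fun j => by positivity) (g · s)
      _ ≤ _ := by
        rw [hσ, ← ENNReal.ofReal_rpow_of_pos hK₀]
        gcongr
        exact hK r hr
  have hinner : ∀ s, ∫⁻ r in Ioi 0, H r s =
      ENNReal.ofReal ((1 / d) ^ (1 / 2 : ℝ) * Gamma (1 / 2)) *
        ∑' j : ℤ, ENNReal.ofReal (ρ ^ j)⁻¹ * g j s ^ p := fun s => by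
    rw [lintegral_tsum fun j => by fun_prop, ← ENNReal.tsum_mul_left]
    refine tsum_congr fun j => ?_
    rw [lintegral_mul_const _ (by fun_prop),
      lintegral_Ioi_rpow_mul_exp_neg_mul one_half_pos (by positivity) hd,
      ENNReal.ofReal_mul (by positivity)]
    ring
  calc _ ≤ ∫⁻ t in Ioo 0 T, ∫⁻ s in Ioo 0 t, ENNReal.ofReal (K ^ (p - 1)) * H (t - s) s :=
        setLIntegral_mono' measurableSet_Ioo fun t _ =>
          setLIntegral_mono' measurableSet_Ioo fun s hs => hpointwise _ (sub_pos.2 hs.2) s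
    _ = ENNReal.ofReal (K ^ (p - 1)) * ∫⁻ t in Ioo 0 T, ∫⁻ s in Ioo 0 t, H (t - s) s := by
        simp_rw [lintegral_const_mul' _ _ ENNReal.ofReal_ne_top]
    _ ≤ ENNReal.ofReal (K ^ (p - 1)) * ∫⁻ s in Ioo 0 T, ∫⁻ r in Ioi 0, H r s :=
        mul_le_mul_of_nonneg_left (lintegral_Ioo_lintegral_Ioo_sub_le T H hH) zero_le
    _ = _ := by
        simp_rw [hinner, lintegral_const_mul' _ _ ENNReal.ofReal_ne_top]
        rw [← mul_assoc, ← ENNReal.ofReal_mul (by positivity)]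

theorem stmt18_general (p α c : ℝ) (hp : 1 < p) (hα0 : 0 < α) (hc : 0 < c) :
    ∃ C > (0:ℝ), ∀ T : ℝ, 0 < T →
      ∀ g : ℤ → ℝ → ℝ≥0∞, (∀ j, Measurable (g j)) →
        ∫⁻ t in Set.Ioo (0:ℝ) T, ∫⁻ s in Set.Ioo (0:ℝ) t,
            (∑' j : ℤ, ENNReal.ofReal (Real.exp (-c * (2:ℝ) ^ (2*(j:ℝ)*α) * (t - s))) *
              g j s) ^ p
          ≤ ENNReal.ofReal C *
            ∫⁻ s in Set.Ioo (0:ℝ) T,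
              ∑' j : ℤ, ENNReal.ofReal ((2:ℝ) ^ (-2*(j:ℝ)*α)) * (g j s) ^ p := by
  have hρ : 1 < (2 : ℝ) ^ (2 * α) := one_lt_rpow one_lt_two (by positivity)
  have hpow : ∀ j : ℤ, (2 : ℝ) ^ (2 * (j : ℝ) * α) = ((2 : ℝ) ^ (2 * α)) ^ j := fun j => by
    rw [← Real.rpow_intCast, ← rpow_mul zero_le_two]; ring_nf
  have hpow_neg : ∀ j : ℤ, (2 : ℝ) ^ (-2 * (j : ℝ) * α) = (((2 : ℝ) ^ (2 * α)) ^ j)⁻¹ :=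
    fun j => by rw [← hpow, ← rpow_neg zero_le_two]; ring_nf
  obtain ⟨C, hC, hCT⟩ := exists_lintegral_rpow_tsum_exp_zpow_le hρ hc hp
  refine ⟨C, hC, fun T _ g hg => ?_⟩
  simp_rw [hpow, hpow_neg]
  exact hCT T g hg

/-- fractional-Laplacian Hardy-type inequality with kernels
f_j(r) = e^{-c 2^{2jα} r} and weights 2^{-2jα}; C is independent of T. -/
theorem stmt18 (p α c : ℝ) (hp : 1 < p) (hα0 : 0 < α) (hα1 : α < 1) (hc : 0 < c) :
    ∃ C > (0:ℝ), ∀ T : ℝ, 0 < T →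
      ∀ g : ℤ → ℝ → ℝ≥0∞, (∀ j, Measurable (g j)) →
        ∫⁻ t in Set.Ioo (0:ℝ) T, ∫⁻ s in Set.Ioo (0:ℝ) t,
            (∑' j : ℤ, ENNReal.ofReal (Real.exp (-c * (2:ℝ) ^ (2*(j:ℝ)*α) * (t - s))) *
              g j s) ^ p
          ≤ ENNReal.ofReal C *
            ∫⁻ s in Set.Ioo (0:ℝ) T,
              ∑' j : ℤ, ENNReal.ofReal ((2:ℝ) ^ (-2*(j:ℝ)*α)) * (g j s) ^ p :=
  stmt18_general p α c hp hα0 hc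
end
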